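/- If a finite connected graph G satisfies DL°(G) = r(G), then G has no uniquely eccentric central vertex. -/

import Mathlib

/-- `G` admits a `k`-circular-dispersed labelling. -/
def HasCircDispersedLabelling {V : Type*} [Fintype V] (G : SimpleGraph V) (k : ℕ) : Prop :=
  ∃ φ : ZMod (Fintype.card V) ≃ V,
    ∀ i : ZMod (Fintype.card V), k ≤ G.dist (φ i) (φ (i + 1))

/-- `DL° G`: the maximum `k` such that `G` admits a `k`-circular-dispersed labelling. -/
noncomputable def DLcirc {V : Type*} [Fintype V] (G : SimpleGraph V) : ℕ :=
  sSup {k | HasCircDispersedLabelling G k}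

/-- The eccentricity of a vertex: the maximum distance to another vertex. -/
noncomputable def eccent {V : Type*} [Fintype V] (G : SimpleGraph V) (v : V) : ℕ :=
  Finset.univ.sup (fun u => G.dist v u)

/-- The radius of a graph: the minimum eccentricity of a vertex. -/
noncomputable def graphRadius {V : Type*} [Fintype V] (G : SimpleGraph V) : ℕ :=
  sInf (Set.range (eccent G))

/-!
Let `v` be a central vertex, so that `ecc v = r`, and take a circular labelling attaining
`DL° = r`. Both cyclic neighbours of `v` then lie at distance at least `r`, hence exactly `r`,
from `v`; with at least three vertices these two neighbours are distinct, so the eccentric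
vertex of `v` is not unique.
-/

lemma ZMod.add_one_ne_sub_one {n : ℕ} (hn : 3 ≤ n) (i : ZMod n) : i + 1 ≠ i - 1 := by
  intro h
  have h2 : ((2 : ℕ) : ZMod n) = 0 := by
    push_cast
    linear_combination h
  have := Nat.le_of_dvd two_pos ((ZMod.natCast_eq_zero_iff 2 n).mp h2)
  omega

section

variable {V : Type*} [Fintype V] (G : SimpleGraph V)

lemma dist_le_eccent (v u : V) : G.dist v u ≤ eccent G v :=
  Finset.le_sup (Finset.mem_univ u)

lemma hasCircDispersedLabelling_zero [Nonempty V] : HasCircDispersedLabelling G 0 := by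
  have : NeZero (Fintype.card V) := ⟨Fintype.card_ne_zero⟩
  obtain ⟨e⟩ := Fintype.card_eq.mp (ZMod.card (Fintype.card V))
  exact ⟨e, fun _ => Nat.zero_le _⟩

variable {G}

lemma HasCircDispersedLabelling.le_sup_eccent {k : ℕ} (hk : HasCircDispersedLabelling G k) :
    k ≤ Finset.univ.sup (eccent G) := by
  obtain ⟨φ, hφ⟩ := hk
  calc k ≤ G.dist (φ 0) (φ 1) := by simpa using hφ 0
    _ ≤ eccent G (φ 0) := dist_le_eccent G _ _
    _ ≤ _ := Finset.le_sup (Finset.mem_univ _)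

lemma HasCircDispersedLabelling.exists_ne_le_dist {k : ℕ} (hk : HasCircDispersedLabelling G k)
    (hcard : 3 ≤ Fintype.card V) (v : V) :
    ∃ w₁ w₂, w₁ ≠ w₂ ∧ k ≤ G.dist v w₁ ∧ k ≤ G.dist v w₂ := by
  obtain ⟨φ, hφ⟩ := hk
  have hv : φ (φ.symm v) = v := φ.apply_symm_apply v
  refine ⟨φ (φ.symm v + 1), φ (φ.symm v - 1),
    φ.injective.ne (ZMod.add_one_ne_sub_one hcard _), ?_, ?_⟩
  · simpa [hv] using hφ (φ.symm v)
  · simpa [G.dist_comm, hv] using hφ (φ.symm v - 1)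

variable (G)

lemma hasCircDispersedLabelling_DLcirc [Nonempty V] : HasCircDispersedLabelling G (DLcirc G) :=
  Nat.sSup_mem ⟨0, hasCircDispersedLabelling_zero G⟩
    ⟨_, fun _ => HasCircDispersedLabelling.le_sup_eccent⟩

end

theorem no_uniquely_eccentric_central_of_DLcirc_eq_radius_general
    {V : Type*} [Fintype V] (G : SimpleGraph V)
    (hcard : 3 ≤ Fintype.card V) (h : DLcirc G = graphRadius G) :
    ¬ ∃ v : V, eccent G v = graphRadius G ∧
        ∃! u : V, G.dist v u = eccent G v := by
  rintro ⟨v, hv, huniq⟩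
  have : Nonempty V := ⟨v⟩
  obtain ⟨w₁, w₂, hne, h₁, h₂⟩ := (hasCircDispersedLabelling_DLcirc G).exists_ne_le_dist hcard v
  rw [h, ← hv] at h₁ h₂
  exact hne (huniq.unique (le_antisymm (dist_le_eccent G v w₁) h₁)
    (le_antisymm (dist_le_eccent G v w₂) h₂))

theorem no_uniquely_eccentric_central_of_DLcirc_eq_radius
    {V : Type*} [Fintype V] (G : SimpleGraph V) (hG : G.Connected)
    (hcard : 3 ≤ Fintype.card V) (h : DLcirc G = graphRadius G) :
    ¬ ∃ v : V, eccent G v = graphRadius G ∧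
        ∃! u : V, G.dist v u = eccent G v :=
  no_uniquely_eccentric_central_of_DLcirc_eq_radius_general G hcard h
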